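/- Let 0 < α < β < 1, let I ≥ 1, and let p and q be probability distributions on {1,…,I} given by p_i = ((1−α)/(1−α^I))·α^{I−i} and q_i = ((1−β)/(1−β^I))·β^{I−i}. Then Σ_{i=1}^I i·p_i − Σ_{i=1}^I i·q_i ≤ β/(1−β) − α/(1−α). -/

import Mathlib

/-!
Clearing the normalising constant, the mean of the truncated geometric distribution with
ratio `x` on `{1, …, I}` is `I - x / (1 - x) + I * x ^ I / (1 - x ^ I)`. The correction term
`I * t / (1 - t)` at `t = x ^ I` is increasing in `x` on `(0, 1)`, so in the difference of the
two means it contributes a nonpositive amount, leaving `β / (1 - β) - α / (1 - α)`.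
-/

open Finset

theorem one_sub_sq_mul_sum_Icc_mul_pow_sub {R : Type*} [CommRing R] (x : R) (I : ℕ) :
    (1 - x) ^ 2 * ∑ i ∈ Icc 1 I, (i : R) * x ^ (I - i) = I - (I + 1) * x + x ^ (I + 1) := by
  induction I with
  | zero => simp
  | succ n ih =>
    have hshift : ∑ i ∈ Icc 1 n, (i : R) * x ^ (n + 1 - i)
        = x * ∑ i ∈ Icc 1 n, (i : R) * x ^ (n - i) := by
      rw [mul_sum]
      refine sum_congr rfl fun i hi => ?_
      rw [Nat.sub_add_comm (mem_Icc.mp hi).2, pow_succ]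
      ring
    rw [sum_Icc_succ_top (by omega), hshift, Nat.sub_self, pow_zero]
    push_cast
    linear_combination x * ih

theorem sum_Icc_mul_truncGeom_eq {K : Type*} [Field K] (x : K) (I : ℕ) (hx : x ^ I ≠ 1) :
    ∑ i ∈ Icc 1 I, (i : K) * ((1 - x) / (1 - x ^ I) * x ^ (I - i))
      = I - x / (1 - x) + I * x ^ I / (1 - x ^ I) := by
  have hx1 : 1 - x ≠ 0 := fun h => hx (by rw [← sub_eq_zero.mp h, one_pow])
  have hxI : 1 - x ^ I ≠ 0 := sub_ne_zero.mpr hx.symm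
  have hfactor : ∑ i ∈ Icc 1 I, (i : K) * ((1 - x) / (1 - x ^ I) * x ^ (I - i))
      = (1 - x) / (1 - x ^ I) * ∑ i ∈ Icc 1 I, (i : K) * x ^ (I - i) := by
    rw [mul_sum]
    exact sum_congr rfl fun i _ => by ring
  rw [hfactor]
  field_simp
  linear_combination one_sub_sq_mul_sum_Icc_mul_pow_sub x I

theorem div_one_sub_le_div_one_sub {K : Type*} [Field K] [LinearOrder K] [IsStrictOrderedRing K]
    {s t : K} (hs : 0 ≤ s) (hst : s ≤ t) (ht : t < 1) : s / (1 - s) ≤ t / (1 - t) :=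
  div_le_div₀ (hs.trans hst) hst (sub_pos.mpr ht) (by linarith)

theorem truncated_geometric_mean_diff
    (α β : ℝ) (hα : 0 < α) (hαβ : α < β) (hβ : β < 1) (I : ℕ) (hI : 1 ≤ I) :
    (∑ i ∈ Finset.Icc 1 I, (i : ℝ) * ((1 - α) / (1 - α ^ I) * α ^ (I - i))) -
      (∑ i ∈ Finset.Icc 1 I, (i : ℝ) * ((1 - β) / (1 - β ^ I) * β ^ (I - i))) ≤
      β / (1 - β) - α / (1 - α) := by
  have hI0 : I ≠ 0 := Nat.one_le_iff_ne_zero.mp hI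
  have hαI : α ^ I < 1 := pow_lt_one₀ hα.le (hαβ.trans hβ) hI0
  have hβI : β ^ I < 1 := pow_lt_one₀ (hα.trans hαβ).le hβ hI0
  rw [sum_Icc_mul_truncGeom_eq α I hαI.ne, sum_Icc_mul_truncGeom_eq β I hβI.ne, mul_div_assoc,
    mul_div_assoc]
  have hcorr : α ^ I / (1 - α ^ I) ≤ β ^ I / (1 - β ^ I) :=
    div_one_sub_le_div_one_sub (by positivity) (pow_le_pow_left₀ hα.le hαβ.le I) hβI
  linarith [mul_le_mul_of_nonneg_left hcorr (Nat.cast_nonneg I : (0 : ℝ) ≤ I)]
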